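/- arXiv:1211.2476 — 4 statements merged into one kernel-verified Lean document; each statement's English description precedes it below -/
import Mathlib

section
/- Consider a location-family random utility model on m alternatives with measurable log-concave probability densities f_1,…,f_m on ℝ. Fix an integer 1 ≤ k ≤ m and an injective map π : {1,…,k} → {1,…,m} (a partial order report in which the k ranked alternatives are listed in order and all unmentioned alternatives are ranked below the lowest mentioned alternative in unspecified order). Define Pr(π|θ) = ∫_{B_π} ∏_{j=1}^m f_j(x_j − θ_j) dx, where B_π = {x ∈ ℝ^m : x_{π(1)} > x_{π(2)} > ⋯ > x_{π(k)} and x_{π(k)} > x_c for every c ∉ π({1,…,k})}. Then θ ↦ Pr(π|θ) is log-concave on ℝ^m: Pr(π | λθ+(1−λ)θ′) ≥ Pr(π|θ)^λ · Pr(π|θ′)^{1−λ} for all θ, θ′ ∈ ℝ^m and λ ∈ [0,1]. -/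
/-!
The integrand `x ↦ ∏ j, f j (x j - θ j)` is jointly log-concave in `(x, θ)`, and so is its
product with the indicator of the convex region `B_π`; integrating out `x` preserves
log-concavity by the Prékopa–Leindler inequality.

Prékopa–Leindler in dimension one: the superlevel sets satisfy
`λ {F > t} + (1 - λ) {G > t} ⊆ {H > t}`, so the one-dimensional Brunn–Minkowski inequality
`|A| + |B| ≤ |A + B|` and the layer cake formula give `λ ∫ F + (1 - λ) ∫ G ≤ ∫ H` when `F` and
`G` have the same supremum. Rescaling `F` and the weighted AM–GM inequality give the
multiplicative form for bounded `F`, `G`, and truncation removes the boundedness. The inequality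
tensorizes by Fubini, which gives it on `ℝⁿ` by induction on `n`.
-/

open MeasureTheory Set Pointwise
open scoped ENNReal NNReal

namespace Real

theorem brunn_minkowski_of_isCompact {K L : Set ℝ} (hK : IsCompact K) (hL : IsCompact L)
    (hK₀ : K.Nonempty) (hL₀ : L.Nonempty) : volume K + volume L ≤ volume (K + L) := by
  set a := sSup K
  set b := sInf L
  have haK : a ∈ K := hK.sSup_mem hK₀
  have hbL : b ∈ L := hL.sInf_mem hL₀
  -- the translates `b + K` and `a + L` of `K` and `L` inside `K + L` overlap only at `a + b`
  have hinter : (b +ᵥ K) ∩ (a +ᵥ L) ⊆ {a + b} := by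
    rintro _ ⟨⟨x, hx, rfl⟩, ⟨y, hy, hxy⟩⟩
    have hxa : x ≤ a := le_csSup hK.bddAbove hx
    have hby : b ≤ y := csInf_le hL.bddBelow hy
    simp only [vadd_eq_add] at hxy ⊢
    rw [mem_singleton_iff]
    linarith
  calc volume K + volume L = volume (b +ᵥ K) + volume (a +ᵥ L) := by
        rw [measure_vadd, measure_vadd]
    _ = volume ((b +ᵥ K) ∪ (a +ᵥ L)) := by
        rw [← measure_union_add_inter _ (hL.vadd a).measurableSet,
          measure_mono_null hinter (measure_singleton _), add_zero]
    _ ≤ volume (K + L) := by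
        refine measure_mono (union_subset ?_ ?_)
        · rw [add_comm K]; exact vadd_set_subset_add hbL
        · exact vadd_set_subset_add haK

theorem brunn_minkowski {A B : Set ℝ} (hA : MeasurableSet A) (hB : MeasurableSet B)
    (hA₀ : A.Nonempty) (hB₀ : B.Nonempty) : volume A + volume B ≤ volume (A + B) := by
  obtain ⟨a, ha⟩ := hA₀
  obtain ⟨b, hb⟩ := hB₀
  rw [hA.measure_eq_iSup_isCompact, hB.measure_eq_iSup_isCompact]
  simp only [iSup_and']
  refine ENNReal.biSup_add_biSup_le' ⟨∅, empty_subset A, isCompact_empty⟩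
    ⟨∅, empty_subset B, isCompact_empty⟩ fun K ⟨hKA, hK⟩ L ⟨hLB, hL⟩ => ?_
  -- enlarging `K` and `L` by a point keeps them compact and makes them nonempty
  calc volume K + volume L ≤ volume (insert a K) + volume (insert b L) :=
        add_le_add (measure_mono (subset_insert _ _)) (measure_mono (subset_insert _ _))
    _ ≤ volume (insert a K + insert b L) :=
        brunn_minkowski_of_isCompact (hK.insert a) (hL.insert b) (insert_nonempty _ _)
          (insert_nonempty _ _)
    _ ≤ volume (A + B) :=
        measure_mono (add_subset_add (insert_subset ha hKA) (insert_subset hb hLB))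

theorem volume_smul_of_nonneg {c : ℝ} (hc : 0 ≤ c) (A : Set ℝ) :
    volume (c • A) = ENNReal.ofReal c * volume A := by
  simpa using Measure.addHaar_smul_of_nonneg volume hc A

end Real

theorem volume_Ioi_inter_setOf_ofReal_lt (a : ℝ≥0∞) :
    volume (Ioi (0 : ℝ) ∩ {t | ENNReal.ofReal t < a}) = a := by
  rcases eq_or_ne a ⊤ with rfl | ha
  · simp [ENNReal.ofReal_lt_top]
  · have : Ioi (0 : ℝ) ∩ {t | ENNReal.ofReal t < a} = Ioo 0 a.toReal := by
      ext t
      simp only [mem_inter_iff, mem_Ioi, mem_ofPred_eq, mem_Ioo, and_congr_right_iff]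
      exact fun ht => ENNReal.ofReal_lt_iff_lt_toReal ht.le ha
    rw [this, Real.volume_Ioo, sub_zero, ENNReal.ofReal_toReal ha]

theorem lintegral_eq_lintegral_Ioi_measure_ofReal_lt {α : Type*} [MeasurableSpace α]
    (μ : Measure α) [SFinite μ] {F : α → ℝ≥0∞} (hF : Measurable F) :
    ∫⁻ x, F x ∂μ = ∫⁻ t in Ioi 0, μ {x | ENNReal.ofReal t < F x} := by
  have hE : MeasurableSet {p : α × ℝ | ENNReal.ofReal p.2 < F p.1} :=
    measurableSet_lt (ENNReal.measurable_ofReal.comp measurable_snd) (hF.comp measurable_fst)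
  calc ∫⁻ x, F x ∂μ = ∫⁻ x, volume.restrict (Ioi 0) {t | ENNReal.ofReal t < F x} ∂μ := by
        simp_rw [Measure.restrict_apply' measurableSet_Ioi, inter_comm,
          volume_Ioi_inter_setOf_ofReal_lt]
    _ = μ.prod (volume.restrict (Ioi 0)) {p | ENNReal.ofReal p.2 < F p.1} :=
        (Measure.prod_apply hE).symm
    _ = ∫⁻ t in Ioi 0, μ {x | ENNReal.ofReal t < F x} := Measure.prod_apply_symm hE

theorem smul_setOf_lt_add_smul_setOf_lt_subset {E : Type*} [AddCommGroup E] [Module ℝ E]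
    {lam : ℝ} (h0 : 0 < lam) (h1 : lam < 1) {F G H : E → ℝ≥0∞}
    (hFGH : ∀ x y, F x ^ lam * G y ^ (1 - lam) ≤ H (lam • x + (1 - lam) • y)) (a : ℝ≥0∞) :
    lam • {x | a < F x} + (1 - lam) • {y | a < G y} ⊆ {z | a < H z} := by
  rintro _ ⟨_, ⟨x, hx, rfl⟩, _, ⟨y, hy, rfl⟩, rfl⟩
  calc a = a ^ lam * a ^ (1 - lam) := by
        rw [← ENNReal.rpow_add_of_nonneg _ _ h0.le (by linarith), add_sub_cancel,
          ENNReal.rpow_one]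
    _ < F x ^ lam * G y ^ (1 - lam) :=
        ENNReal.mul_lt_mul (ENNReal.rpow_lt_rpow hx h0) (ENNReal.rpow_lt_rpow hy (by linarith))
    _ ≤ H (lam • x + (1 - lam) • y) := hFGH x y

theorem ENNReal.geom_mean_le_arith_mean2_weighted {lam : ℝ} (h0 : 0 < lam) (h1 : lam < 1)
    (a b : ℝ≥0∞) :
    a ^ lam * b ^ (1 - lam) ≤ ENNReal.ofReal lam * a + ENNReal.ofReal (1 - lam) * b := by
  rcases eq_or_ne a ⊤ with rfl | ha
  · simp [ENNReal.mul_top, h0]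
  rcases eq_or_ne b ⊤ with rfl | hb
  · simp [ENNReal.mul_top, h1]
  lift a to ℝ≥0 using ha
  lift b to ℝ≥0 using hb
  have key := NNReal.geom_mean_le_arith_mean2_weighted lam.toNNReal (1 - lam).toNNReal a b
    (by rw [← Real.toNNReal_add h0.le (by linarith), add_sub_cancel, Real.toNNReal_one])
  rw [Real.coe_toNNReal _ h0.le, Real.coe_toNNReal _ (by linarith)] at key
  rw [← ENNReal.coe_rpow_of_nonneg _ h0.le, ← ENNReal.coe_rpow_of_nonneg _ (by linarith),
    ENNReal.ofReal, ENNReal.ofReal]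
  exact_mod_cast key

theorem ENNReal.rpow_iSup_mul_rpow_iSup_le {a b : ℕ → ℝ≥0∞} (ha : Monotone a) (hb : Monotone b)
    {p q : ℝ} (hp : 0 < p) (hq : 0 < q) {c : ℝ≥0∞} (h : ∀ n, a n ^ p * b n ^ q ≤ c) :
    (⨆ n, a n) ^ p * (⨆ n, b n) ^ q ≤ c := by
  have hpow : ∀ {r : ℝ}, 0 < r → ∀ {u : ℕ → ℝ≥0∞}, (⨆ n, u n) ^ r = ⨆ n, u n ^ r :=
    fun hr => Monotone.map_iSup_of_continuousAt (ENNReal.continuous_rpow_const.continuousAt)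
      (ENNReal.monotone_rpow_of_nonneg hr.le) (ENNReal.zero_rpow_of_pos hr)
  rw [hpow hp, hpow hq, ENNReal.iSup_mul]
  refine iSup_le fun n => ?_
  rw [ENNReal.mul_iSup]
  refine iSup_le fun m => (h (max n m)).trans' ?_
  gcongr
  exacts [ha (le_max_left n m), hb (le_max_right n m)]

theorem lintegral_eq_iSup_lintegral_min_natCast {α : Type*} [MeasurableSpace α] {μ : Measure α}
    {F : α → ℝ≥0∞} (hF : Measurable F) : ∫⁻ x, F x ∂μ = ⨆ n : ℕ, ∫⁻ x, min (F x) n ∂μ := by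
  rw [← lintegral_iSup (fun n => hF.min measurable_const)
    fun n m hnm x => min_le_min_left _ (Nat.cast_le.2 hnm)]
  congr with x
  rw [← inf_iSup_eq, ENNReal.iSup_natCast]
  exact (inf_top_eq _).symm

theorem Real.prekopa_leindler_additive {lam : ℝ} (h0 : 0 < lam) (h1 : lam < 1)
    {F G H : ℝ → ℝ≥0∞} (hF : Measurable F) (hG : Measurable G) (hH : Measurable H)
    (hsup : ⨆ x, F x = ⨆ x, G x)
    (hFGH : ∀ x y, F x ^ lam * G y ^ (1 - lam) ≤ H (lam • x + (1 - lam) • y)) :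
    ENNReal.ofReal lam * (∫⁻ x, F x) + ENNReal.ofReal (1 - lam) * ∫⁻ x, G x ≤ ∫⁻ x, H x := by
  have hlevel : ∀ t : ℝ, ENNReal.ofReal lam * volume {x | ENNReal.ofReal t < F x} +
      ENNReal.ofReal (1 - lam) * volume {x | ENNReal.ofReal t < G x} ≤
      volume {x | ENNReal.ofReal t < H x} := by
    intro t
    by_cases ht : ENNReal.ofReal t < ⨆ x, F x
    · obtain ⟨x, hx⟩ := lt_iSup_iff.1 ht
      obtain ⟨y, hy⟩ := lt_iSup_iff.1 (hsup ▸ ht)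
      rw [← Real.volume_smul_of_nonneg h0.le, ← Real.volume_smul_of_nonneg (by linarith)]
      calc _ ≤ volume (lam • {x | ENNReal.ofReal t < F x} +
              (1 - lam) • {x | ENNReal.ofReal t < G x}) :=
            Real.brunn_minkowski ((hF measurableSet_Ioi).const_smul₀ _)
              ((hG measurableSet_Ioi).const_smul₀ _) (Nonempty.smul_set ⟨x, hx⟩)
              (Nonempty.smul_set ⟨y, hy⟩)
        _ ≤ _ := measure_mono (smul_setOf_lt_add_smul_setOf_lt_subset h0 h1 hFGH _)
    · -- above the common supremum both superlevel sets are empty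
      have hFt : {x | ENNReal.ofReal t < F x} = ∅ :=
        eq_empty_of_forall_notMem fun x hx => ht (lt_of_lt_of_le hx (le_iSup F x))
      have hGt : {x | ENNReal.ofReal t < G x} = ∅ :=
        eq_empty_of_forall_notMem fun x hx => ht (hsup ▸ lt_of_lt_of_le hx (le_iSup G x))
      simp [hFt, hGt]
  calc ENNReal.ofReal lam * (∫⁻ x, F x) + ENNReal.ofReal (1 - lam) * ∫⁻ x, G x
      = (∫⁻ t in Ioi 0, ENNReal.ofReal lam * volume {x | ENNReal.ofReal t < F x}) +
          ∫⁻ t in Ioi 0, ENNReal.ofReal (1 - lam) * volume {x | ENNReal.ofReal t < G x} := by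
        rw [lintegral_const_mul' _ _ ENNReal.ofReal_ne_top,
          lintegral_const_mul' _ _ ENNReal.ofReal_ne_top,
          ← lintegral_eq_lintegral_Ioi_measure_ofReal_lt volume hF,
          ← lintegral_eq_lintegral_Ioi_measure_ofReal_lt volume hG]
    _ ≤ ∫⁻ t in Ioi 0, volume {x | ENNReal.ofReal t < H x} :=
        (le_lintegral_add _ _).trans (lintegral_mono hlevel)
    _ = ∫⁻ x, H x := (lintegral_eq_lintegral_Ioi_measure_ofReal_lt volume hH).symm

theorem Real.prekopa_leindler_of_iSup_ne_top {lam : ℝ} (h0 : 0 < lam) (h1 : lam < 1)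
    {F G H : ℝ → ℝ≥0∞} (hF : Measurable F) (hG : Measurable G) (hH : Measurable H)
    (hFtop : ⨆ x, F x ≠ ⊤) (hGtop : ⨆ x, G x ≠ ⊤)
    (hFGH : ∀ x y, F x ^ lam * G y ^ (1 - lam) ≤ H (lam • x + (1 - lam) • y)) :
    (∫⁻ x, F x) ^ lam * (∫⁻ x, G x) ^ (1 - lam) ≤ ∫⁻ x, H x := by
  rcases eq_or_ne (⨆ x, F x) 0 with hF0 | hF0
  · simp [ENNReal.iSup_eq_zero.1 hF0, ENNReal.zero_rpow_of_pos h0]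
  rcases eq_or_ne (⨆ x, G x) 0 with hG0 | hG0
  · simp [ENNReal.iSup_eq_zero.1 hG0, ENNReal.zero_rpow_of_pos (sub_pos.2 h1)]
  -- rescale `F` by `c` so that it has the same supremum as `G`, and `H` by `c ^ lam`
  set c := (⨆ x, G x) / ⨆ x, F x
  have hc0 : c ^ lam ≠ 0 := by simp [c, ENNReal.rpow_eq_zero_iff, h0, hG0, hFtop, not_lt.2 h0.le]
  have hctop : c ^ lam ≠ ⊤ := by
    simp [c, ENNReal.rpow_eq_top_iff, h0, hF0, hGtop, ENNReal.div_eq_top, not_lt.2 h0.le]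
  have hsup : ⨆ x, c * F x = ⨆ x, G x := by
    rw [← ENNReal.mul_iSup, ENNReal.div_mul_cancel hF0 hFtop]
  have hadd := Real.prekopa_leindler_additive h0 h1 (hF.const_mul c) hG (hH.const_mul (c ^ lam))
    hsup fun x y => by
      rw [ENNReal.mul_rpow_of_nonneg _ _ h0.le, mul_assoc]
      gcongr
      exact hFGH x y
  rw [lintegral_const_mul _ hF, lintegral_const_mul _ hH] at hadd
  refine (ENNReal.mul_le_mul_iff_right hc0 hctop).1 ?_
  calc c ^ lam * ((∫⁻ x, F x) ^ lam * (∫⁻ x, G x) ^ (1 - lam))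
      = (c * ∫⁻ x, F x) ^ lam * (∫⁻ x, G x) ^ (1 - lam) := by
        rw [ENNReal.mul_rpow_of_nonneg _ _ h0.le, mul_assoc]
    _ ≤ _ := ENNReal.geom_mean_le_arith_mean2_weighted h0 h1 _ _
    _ ≤ _ := hadd

def SatisfiesPrekopaLeindler {E : Type*} [AddCommGroup E] [Module ℝ E] [MeasurableSpace E]
    (μ : Measure E) (lam : ℝ) : Prop :=
  ∀ F G H : E → ℝ≥0∞, Measurable F → Measurable G → Measurable H →
    (∀ x y, F x ^ lam * G y ^ (1 - lam) ≤ H (lam • x + (1 - lam) • y)) →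
    (∫⁻ x, F x ∂μ) ^ lam * (∫⁻ x, G x ∂μ) ^ (1 - lam) ≤ ∫⁻ x, H x ∂μ

theorem Real.satisfiesPrekopaLeindler_volume {lam : ℝ} (h0 : 0 < lam) (h1 : lam < 1) :
    SatisfiesPrekopaLeindler (volume : Measure ℝ) lam := by
  intro F G H hF hG hH hFGH
  have hmono : ∀ K : ℝ → ℝ≥0∞, Monotone fun n : ℕ => ∫⁻ x, min (K x) n :=
    fun K n m hnm => lintegral_mono fun x => min_le_min_left _ (Nat.cast_le.2 hnm)
  have htop : ∀ (K : ℝ → ℝ≥0∞) (n : ℕ), ⨆ x, min (K x) n ≠ ⊤ := fun K n =>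
    ne_top_of_le_ne_top (ENNReal.natCast_ne_top n) (iSup_le fun x => min_le_right _ _)
  rw [lintegral_eq_iSup_lintegral_min_natCast hF, lintegral_eq_iSup_lintegral_min_natCast hG]
  refine ENNReal.rpow_iSup_mul_rpow_iSup_le (hmono F) (hmono G) h0 (sub_pos.2 h1) fun n => ?_
  refine Real.prekopa_leindler_of_iSup_ne_top h0 h1 (hF.min measurable_const)
    (hG.min measurable_const) hH (htop F n) (htop G n) fun x y => (hFGH x y).trans' ?_
  gcongr <;> exact min_le_left _ _

namespace SatisfiesPrekopaLeindler

variable {E E' : Type*} [AddCommGroup E] [Module ℝ E] [MeasurableSpace E]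
  [AddCommGroup E'] [Module ℝ E'] [MeasurableSpace E'] {lam : ℝ}

theorem dirac [MeasurableSingletonClass E] (x₀ : E) :
    SatisfiesPrekopaLeindler (Measure.dirac x₀) lam := by
  intro F G H _ _ _ hFGH
  simpa [lintegral_dirac, ← add_smul] using hFGH x₀ x₀

theorem prod {μ : Measure E} {ν : Measure E'} [SFinite ν] (hμ : SatisfiesPrekopaLeindler μ lam)
    (hν : SatisfiesPrekopaLeindler ν lam) : SatisfiesPrekopaLeindler (μ.prod ν) lam := by
  intro F G H hF hG hH hFGH
  rw [lintegral_prod _ hF.aemeasurable, lintegral_prod _ hG.aemeasurable,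
    lintegral_prod _ hH.aemeasurable]
  refine hμ _ _ _ hF.lintegral_prod_right' hG.lintegral_prod_right' hH.lintegral_prod_right'
    fun x y => hν _ _ _ (hF.comp measurable_prodMk_left) (hG.comp measurable_prodMk_left)
      (hH.comp measurable_prodMk_left) fun z w => hFGH (x, z) (y, w)

theorem of_measurePreserving {μ : Measure E} {ν : Measure E'} (e : E →ₗ[ℝ] E')
    (he : MeasurePreserving e μ ν) (hμ : SatisfiesPrekopaLeindler μ lam) :
    SatisfiesPrekopaLeindler ν lam := by
  intro F G H hF hG hH hFGH
  rw [← he.lintegral_comp hF, ← he.lintegral_comp hG, ← he.lintegral_comp hH]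
  refine hμ _ _ _ (hF.comp he.measurable) (hG.comp he.measurable) (hH.comp he.measurable)
    fun x y => ?_
  simpa only [map_add, map_smul] using hFGH (e x) (e y)

theorem integral_rpow_mul_integral_rpow_le {μ : Measure E}
    (hμ : SatisfiesPrekopaLeindler μ lam) (h0 : 0 ≤ lam) (h1 : lam ≤ 1) {f g h : E → ℝ}
    (hf : Measurable f) (hg : Measurable g) (hh : Measurable h) (hf0 : ∀ x, 0 ≤ f x)
    (hg0 : ∀ x, 0 ≤ g x) (hh0 : ∀ x, 0 ≤ h x) (hhi : Integrable h μ)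
    (hfgh : ∀ x y, f x ^ lam * g y ^ (1 - lam) ≤ h (lam • x + (1 - lam) • y)) :
    (∫ x, f x ∂μ) ^ lam * (∫ x, g x ∂μ) ^ (1 - lam) ≤ ∫ x, h x ∂μ := by
  simp only [integral_eq_lintegral_of_nonneg_ae (ae_of_all _ hf0) hf.aestronglyMeasurable,
    integral_eq_lintegral_of_nonneg_ae (ae_of_all _ hg0) hg.aestronglyMeasurable,
    integral_eq_lintegral_of_nonneg_ae (ae_of_all _ hh0) hh.aestronglyMeasurable]
  rw [ENNReal.toReal_rpow, ENNReal.toReal_rpow, ← ENNReal.toReal_mul]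
  refine ENNReal.toReal_mono hhi.lintegral_lt_top.ne <| hμ _ _ _ hf.ennreal_ofReal
    hg.ennreal_ofReal hh.ennreal_ofReal fun x y => ?_
  rw [ENNReal.ofReal_rpow_of_nonneg (hf0 x) h0, ENNReal.ofReal_rpow_of_nonneg (hg0 y) (by linarith),
    ← ENNReal.ofReal_mul (Real.rpow_nonneg (hf0 x) _)]
  exact ENNReal.ofReal_le_ofReal (hfgh x y)

end SatisfiesPrekopaLeindler

theorem satisfiesPrekopaLeindler_volume_pi {lam : ℝ} (h0 : 0 < lam) (h1 : lam < 1) :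
    ∀ n, SatisfiesPrekopaLeindler (volume : Measure (Fin n → ℝ)) lam
  | 0 => by
    have h : (volume : Measure (Fin 0 → ℝ)) = Measure.dirac 0 := Measure.pi_of_empty _ 0
    rw [h]
    exact .dirac 0
  | n + 1 => by
    have hcons : ⇑(Fin.consLinearEquiv ℝ fun _ : Fin (n + 1) => ℝ) =
        (MeasurableEquiv.piFinSuccAbove (fun _ => ℝ) 0).symm := by
      funext p
      simp only [MeasurableEquiv.piFinSuccAbove_symm_apply, Fin.insertNthEquiv_zero]
      rfl
    have he : MeasurePreserving (Fin.consLinearEquiv ℝ fun _ : Fin (n + 1) => ℝ)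
        ((volume : Measure ℝ).prod volume) volume := by
      rw [hcons]
      exact (measurePreserving_piFinSuccAbove (fun _ => volume) 0).symm
    exact ((Real.satisfiesPrekopaLeindler_volume h0 h1).prod
      (satisfiesPrekopaLeindler_volume_pi h0 h1 n)).of_measurePreserving
      (Fin.consLinearEquiv ℝ fun _ : Fin (n + 1) => ℝ).toLinearMap he

theorem Convex.indicator_rpow_mul_indicator_rpow_le {E : Type*} [AddCommGroup E] [Module ℝ E]
    {s : Set E} (hs : Convex ℝ s) {lam : ℝ} (h0 : 0 < lam) (h1 : lam < 1) {f g h : E → ℝ}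
    (hh0 : ∀ x, 0 ≤ h x)
    (hfgh : ∀ x ∈ s, ∀ y ∈ s, f x ^ lam * g y ^ (1 - lam) ≤ h (lam • x + (1 - lam) • y))
    (x y : E) :
    s.indicator f x ^ lam * s.indicator g y ^ (1 - lam) ≤
      s.indicator h (lam • x + (1 - lam) • y) := by
  by_cases hx : x ∈ s
  · by_cases hy : y ∈ s
    · rw [indicator_of_mem hx, indicator_of_mem hy,
        indicator_of_mem (hs hx hy h0.le (by linarith) (by ring))]
      exact hfgh x hx y hy
    · rw [indicator_of_notMem hy, Real.zero_rpow (by linarith), mul_zero]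
      exact indicator_nonneg (fun z _ => hh0 z) _
  · rw [indicator_of_notMem hx, Real.zero_rpow h0.ne', zero_mul]
    exact indicator_nonneg (fun z _ => hh0 z) _

theorem prod_rpow_mul_prod_rpow_le {ι : Type*} [Fintype ι] {lam : ℝ} {f : ι → ℝ → ℝ}
    (hf0 : ∀ j x, 0 ≤ f j x)
    (hf : ∀ j x y, f j x ^ lam * f j y ^ (1 - lam) ≤ f j (lam * x + (1 - lam) * y))
    (θ θ' x y : ι → ℝ) :
    (∏ j, f j (x j - θ j)) ^ lam * (∏ j, f j (y j - θ' j)) ^ (1 - lam) ≤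
      ∏ j, f j ((lam • x + (1 - lam) • y) j - (lam • θ + (1 - lam) • θ') j) := by
  rw [← Real.finsetProd_rpow _ _ (fun j _ => hf0 j _),
    ← Real.finsetProd_rpow _ _ (fun j _ => hf0 j _), ← Finset.prod_mul_distrib]
  refine Finset.prod_le_prod (fun j _ => mul_nonneg (Real.rpow_nonneg (hf0 j _) _)
    (Real.rpow_nonneg (hf0 j _) _)) fun j _ => ?_
  refine (hf j (x j - θ j) (y j - θ' j)).trans_eq (congrArg (f j) ?_)
  simp only [Pi.add_apply, Pi.smul_apply, smul_eq_mul]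
  ring

theorem convex_setOf_apply_lt_apply {ι : Type*} (i j : ι) :
    Convex ℝ {x : ι → ℝ | x i < x j} := by
  intro x hx y hy a b ha hb hab
  rcases ha.eq_or_lt with rfl | ha
  · simpa [show b = 1 by linarith] using hy
  · change a * x i + b * y i < a * x j + b * y j
    nlinarith [mul_lt_mul_of_pos_left (show x i < x j from hx) ha,
      mul_le_mul_of_nonneg_left (show y i ≤ y j from le_of_lt hy) hb]

/-- The probability of a partial-order report in a location-family random utility
model: the `k` alternatives `π 1, …, π k` are ranked in that order, and every
unmentioned alternative is ranked below the lowest mentioned one, `π k`. -/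
noncomputable def rumProbPartial {m k : ℕ} (hk : 1 ≤ k) (f : Fin m → ℝ → ℝ)
    (θ : Fin m → ℝ) (π : Fin k → Fin m) : ℝ :=
  ∫ x in {x : Fin m → ℝ |
      (∀ r s : Fin k, r < s → x (π s) < x (π r)) ∧
      (∀ c : Fin m, c ∉ Set.range π → x c < x (π ⟨k - 1, by omega⟩))},
    ∏ j, f j (x j - θ j)

def rankingRegion {m k : ℕ} (hk : 1 ≤ k) (π : Fin k → Fin m) : Set (Fin m → ℝ) :=
  {x | (∀ r s : Fin k, r < s → x (π s) < x (π r)) ∧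
    (∀ c : Fin m, c ∉ Set.range π → x c < x (π ⟨k - 1, by omega⟩))}

theorem measurableSet_rankingRegion {m k : ℕ} (hk : 1 ≤ k) (π : Fin k → Fin m) :
    MeasurableSet (rankingRegion hk π) := by
  simp only [rankingRegion, ofPred_and, ofPred_forall]
  measurability

theorem convex_rankingRegion {m k : ℕ} (hk : 1 ≤ k) (π : Fin k → Fin m) :
    Convex ℝ (rankingRegion hk π) := by
  rintro x ⟨hx₁, hx₂⟩ y ⟨hy₁, hy₂⟩ a b ha hb hab
  exact ⟨fun r s hrs => convex_setOf_apply_lt_apply _ _ (hx₁ r s hrs) (hy₁ r s hrs) ha hb hab,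
    fun c hc => convex_setOf_apply_lt_apply _ _ (hx₂ c hc) (hy₂ c hc) ha hb hab⟩

theorem rumProbPartial_eq_integral_indicator {m k : ℕ} (hk : 1 ≤ k) (f : Fin m → ℝ → ℝ)
    (θ : Fin m → ℝ) (π : Fin k → Fin m) :
    rumProbPartial hk f θ π =
      ∫ x, (rankingRegion hk π).indicator (fun x => ∏ j, f j (x j - θ j)) x :=
  (integral_indicator (measurableSet_rankingRegion hk π)).symm

theorem stmt1_general (m k : ℕ) (hk : 1 ≤ k) (f : Fin m → ℝ → ℝ)
    (hmeas : ∀ j, Measurable (f j))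
    (hnonneg : ∀ j x, 0 ≤ f j x)
    (hint : ∀ j, ∫ x, f j x = 1)
    (hlogconcave : ∀ j (x y lam : ℝ), 0 ≤ lam → lam ≤ 1 →
      f j x ^ lam * f j y ^ (1 - lam) ≤ f j (lam * x + (1 - lam) * y))
    (π : Fin k → Fin m)
    (θ θ' : Fin m → ℝ) (lam : ℝ) (h0 : 0 ≤ lam) (h1 : lam ≤ 1) :
    rumProbPartial hk f θ π ^ lam * rumProbPartial hk f θ' π ^ (1 - lam) ≤
      rumProbPartial hk f (lam • θ + (1 - lam) • θ') π := by
  rcases h0.eq_or_lt with rfl | h0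
  · simp
  rcases h1.eq_or_lt with rfl | h1
  · simp
  have hS := measurableSet_rankingRegion hk π
  have hmeas' : ∀ ϑ : Fin m → ℝ, Measurable fun x : Fin m → ℝ => ∏ j, f j (x j - ϑ j) :=
    fun ϑ => Finset.measurable_prod _ fun j _ =>
      (hmeas j).comp ((measurable_pi_apply j).sub_const _)
  have hnonneg' : ∀ ϑ x : Fin m → ℝ, 0 ≤ ∏ j, f j (x j - ϑ j) :=
    fun ϑ x => Finset.prod_nonneg fun j _ => hnonneg j _
  have hint' : ∀ ϑ : Fin m → ℝ, Integrable fun x : Fin m → ℝ => ∏ j, f j (x j - ϑ j) :=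
    fun ϑ => Integrable.fin_nat_prod fun j =>
      (integrable_of_integral_eq_one (hint j)).comp_sub_right _
  simp only [rumProbPartial_eq_integral_indicator]
  exact (satisfiesPrekopaLeindler_volume_pi h0 h1 m).integral_rpow_mul_integral_rpow_le
    h0.le h1.le ((hmeas' θ).indicator hS) ((hmeas' θ').indicator hS) ((hmeas' _).indicator hS)
    (indicator_nonneg fun x _ => hnonneg' θ x) (indicator_nonneg fun x _ => hnonneg' θ' x)
    (indicator_nonneg fun x _ => hnonneg' _ x) ((hint' _).indicator hS)
    ((convex_rankingRegion hk π).indicator_rpow_mul_indicator_rpow_le h0 h1 (hnonneg' _)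
      fun x _ y _ => prod_rpow_mul_prod_rpow_le hnonneg
        (fun j x y => hlogconcave j x y lam h0.le h1.le) θ θ' x y)

theorem stmt1 (m k : ℕ) (hk : 1 ≤ k) (hkm : k ≤ m) (f : Fin m → ℝ → ℝ)
    (hmeas : ∀ j, Measurable (f j))
    (hnonneg : ∀ j x, 0 ≤ f j x)
    (hint : ∀ j, ∫ x, f j x = 1)
    (hlogconcave : ∀ j (x y lam : ℝ), 0 ≤ lam → lam ≤ 1 →
      f j x ^ lam * f j y ^ (1 - lam) ≤ f j (lam * x + (1 - lam) * y))
    (π : Fin k → Fin m) (hπ : Function.Injective π)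
    (θ θ' : Fin m → ℝ) (lam : ℝ) (h0 : 0 ≤ lam) (h1 : lam ≤ 1) :
    rumProbPartial hk f θ π ^ lam * rumProbPartial hk f θ' π ^ (1 - lam) ≤
      rumProbPartial hk f (lam • θ + (1 - lam) • θ') π :=
  stmt1_general m k hk f hmeas hnonneg hint hlogconcave π θ θ' lam h0 h1
end

section
/- The Gumbel location-family random utility model yields exactly the Plackett-Luce probabilities: let λ_1,…,λ_m > 0, let θ_j = log λ_j, and let f_j(x) = exp(−(x−θ_j)) · exp(−exp(−(x−θ_j))) be the Gumbel density with location θ_j. Then for every permutation π of {1,…,m}, ∫_{A_π} ∏_{j=1}^m f_j(x_j) dx = ∏_{j=1}^m λ_{π(j)} / ∑_{j′=j}^m λ_{π(j′)}, where A_π = {x ∈ ℝ^m : x_{π(1)} > x_{π(2)} > ⋯ > x_{π(m)}}. -/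
/-!
Parametrize the Gumbel law with location `θ` by its weight `c = exp θ`. Its density
`gumbelPDF c` is the derivative of `gumbelCDF c t = exp (-c e^{-t})`, and
`gumbelPDF a * gumbelCDF b = a / (a + b) * gumbelPDF (a + b)`.
For a decreasing tuple `y₀ > y₁ > ⋯` with weights `μ`, integrating out `y₁, y₂, …` (all below
`y₀`) leaves, by induction, `gumbelPDF μ₀ y₀ * plackettLuce (μ₁, …) * gumbelCDF (μ₁ + ⋯) y₀`,
which the identity above turns into `plackettLuce μ * gumbelPDF (∑ μ) y₀`; the last integration
over `y₀` gives `plackettLuce μ`. A permutation of the coordinates reduces any ranking to the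
decreasing one.
-/

open MeasureTheory

/-- The probability that the ranking `π` is realized in a location-family random
utility model with noise densities `f j` and location parameters `θ j`. -/
noncomputable def rumProb {m : ℕ} (f : Fin m → ℝ → ℝ) (θ : Fin m → ℝ)
    (π : Equiv.Perm (Fin m)) : ℝ :=
  ∫ x in {x : Fin m → ℝ | ∀ k l : Fin m, k < l → x (π l) < x (π k)},
    ∏ j, f j (x j - θ j)

open Set Filter Topology

section Gumbel

open Real

/-- The Gumbel density with location `log c`. -/
noncomputable def gumbelPDF (c t : ℝ) : ℝ := c * exp (-t) * exp (-(c * exp (-t)))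

noncomputable def gumbelCDF (c t : ℝ) : ℝ := exp (-(c * exp (-t)))

variable {c : ℝ}

lemma gumbelPDF_eq_comp_sub_log (hc : 0 < c) (x : ℝ) :
    gumbelPDF c x = exp (-(x - log c)) * exp (-exp (-(x - log c))) := by
  have h : exp (-(x - log c)) = c * exp (-x) := by
    rw [neg_sub, sub_eq_add_neg, exp_add, exp_log hc]
  rw [h, gumbelPDF]

lemma gumbelPDF_nonneg (hc : 0 ≤ c) (t : ℝ) : 0 ≤ gumbelPDF c t := by
  unfold gumbelPDF; positivity

lemma continuous_gumbelPDF (c : ℝ) : Continuous (gumbelPDF c) := by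
  unfold gumbelPDF; fun_prop

lemma hasDerivAt_gumbelCDF (c t : ℝ) : HasDerivAt (gumbelCDF c) (gumbelPDF c t) t :=
  (((hasDerivAt_neg t).exp.const_mul c).neg).exp.congr_deriv (by
    simp only [gumbelPDF, Pi.neg_apply]; ring)

lemma gumbelCDF_le_one (hc : 0 ≤ c) (t : ℝ) : gumbelCDF c t ≤ 1 :=
  exp_le_one_iff.2 (neg_nonpos.2 (by positivity))

lemma tendsto_gumbelCDF_atBot (hc : 0 < c) : Tendsto (gumbelCDF c) atBot (𝓝 0) :=
  tendsto_exp_atBot.comp <| tendsto_neg_atTop_atBot.comp <|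
    (tendsto_exp_atTop.comp tendsto_neg_atBot_atTop).const_mul_atTop hc

lemma tendsto_gumbelCDF_atTop (c : ℝ) : Tendsto (gumbelCDF c) atTop (𝓝 1) := by
  unfold gumbelCDF
  have h : Tendsto (fun t => -(c * exp (-t))) atTop (𝓝 0) := by
    simpa using ((tendsto_exp_atBot.comp tendsto_neg_atTop_atBot).const_mul c).neg
  simpa [Function.comp_def] using (continuous_exp.tendsto 0).comp h

lemma integrable_gumbelPDF (hc : 0 ≤ c) : Integrable (gumbelPDF c) := by
  refine integrable_of_intervalIntegral_norm_bounded 1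
    (fun _ => (continuous_gumbelPDF c).integrableOn_Ioc) tendsto_neg_atTop_atBot tendsto_id
    (Eventually.of_forall fun u => ?_)
  simp_rw [Real.norm_of_nonneg (gumbelPDF_nonneg hc _)]
  rw [intervalIntegral.integral_eq_sub_of_hasDerivAt (fun t _ => hasDerivAt_gumbelCDF c t)
    ((continuous_gumbelPDF c).intervalIntegrable _ _)]
  have hpos : 0 < gumbelCDF c (-u) := exp_pos _
  linarith [gumbelCDF_le_one hc (id u)]

lemma integral_Iio_gumbelPDF (hc : 0 < c) (u : ℝ) :
    ∫ t in Iio u, gumbelPDF c t = gumbelCDF c u := by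
  rw [setIntegral_congr_set Iio_ae_eq_Iic, integral_Iic_of_hasDerivAt_of_tendsto'
    (fun t _ => hasDerivAt_gumbelCDF c t) (integrable_gumbelPDF hc.le).integrableOn
    (tendsto_gumbelCDF_atBot hc), sub_zero]

lemma integral_gumbelPDF (hc : 0 < c) : ∫ t, gumbelPDF c t = 1 := by
  rw [integral_of_hasDerivAt_of_tendsto (hasDerivAt_gumbelCDF c) (integrable_gumbelPDF hc.le)
    (tendsto_gumbelCDF_atBot hc) (tendsto_gumbelCDF_atTop c), sub_zero]

lemma gumbelPDF_mul_gumbelCDF {a b : ℝ} (hab : a + b ≠ 0) (t : ℝ) :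
    gumbelPDF a t * gumbelCDF b t = a / (a + b) * gumbelPDF (a + b) t := by
  simp only [gumbelPDF, gumbelCDF]
  rw [mul_assoc, ← exp_add, ← neg_add, ← add_mul]
  field_simp

end Gumbel

noncomputable def plackettLuce {n : ℕ} (μ : Fin n → ℝ) : ℝ :=
  ∏ j, μ j / ∑ j' ∈ Finset.Ici j, μ j'

lemma plackettLuce_succ {n : ℕ} (μ : Fin (n + 1) → ℝ) :
    plackettLuce μ = μ 0 / (∑ j, μ j) * plackettLuce (fun i => μ i.succ) := by
  simp only [plackettLuce, Fin.prod_univ_succ, Fin.sum_Ici_succ]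
  rw [← bot_eq_zero, Finset.Ici_bot]

lemma Fin.strictAnti_cons {α : Type*} [Preorder α] {n : ℕ} (s : α) (z : Fin n → α) :
    StrictAnti (Fin.cons s z : Fin (n + 1) → α) ↔ (∀ i, z i < s) ∧ StrictAnti z :=
  Fin.liftFun_cons (· > ·)

lemma measurableSet_strictAnti {ι : Type*} [Countable ι] [Preorder ι] :
    MeasurableSet {y : ι → ℝ | StrictAnti y} :=
  measurableSet_setOfPred.2 <| Measurable.forall fun k => Measurable.forall fun l =>
    measurable_const.imp <| measurableSet_setOfPred.1 <|
      measurableSet_lt (measurable_pi_apply l) (measurable_pi_apply k)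

theorem setIntegral_strictAnti_comp_perm {ι : Type*} [Fintype ι] [Preorder ι]
    (σ : Equiv.Perm ι) (g : ι → ℝ → ℝ) :
    ∫ x in {x : ι → ℝ | StrictAnti (x ∘ σ)}, ∏ j, g j (x j) =
      ∫ y in {y : ι → ℝ | StrictAnti y}, ∏ j, g (σ j) (y j) := by
  let e := MeasurableEquiv.piCongrLeft (fun _ : ι => ℝ) σ
  have he_apply (y : ι → ℝ) (j : ι) : e y (σ j) = y j :=
    Equiv.piCongrLeft_apply_apply (fun _ => ℝ) σ y j
  have hpre : e ⁻¹' {x | StrictAnti (x ∘ σ)} = {y | StrictAnti y} := by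
    ext y
    simp only [mem_preimage, mem_ofPred_eq, Function.comp_def, he_apply]
  rw [← (volume_measurePreserving_piCongrLeft _ σ).setIntegral_preimage_emb
    e.measurableEmbedding, hpre]
  congr 1 with y
  rw [← Equiv.prod_comp σ (fun j => g j (e y j))]
  simp only [he_apply]

theorem setIntegral_strictAnti_cons {n : ℕ} {g : Fin (n + 1) → ℝ → ℝ}
    (hg : ∀ j, Integrable (g j)) {I : Set ℝ} (hI : MeasurableSet I) :
    ∫ y in {y : Fin (n + 1) → ℝ | StrictAnti y ∧ y 0 ∈ I}, ∏ j, g j (y j) =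
      ∫ s in I, g 0 s *
        ∫ z in {z : Fin n → ℝ | StrictAnti z ∧ ∀ i, z i < s}, ∏ i, g i.succ (z i) := by
  set F : (Fin (n + 1) → ℝ) → ℝ := fun y => ∏ j, g j (y j)
  set G : (Fin n → ℝ) → ℝ := fun z => ∏ i, g i.succ (z i)
  set T := {y : Fin (n + 1) → ℝ | StrictAnti y ∧ y 0 ∈ I}
  set V : ℝ → Set (Fin n → ℝ) := fun s => {z | StrictAnti z ∧ ∀ i, z i < s}
  have hT : MeasurableSet T := measurableSet_strictAnti.inter (measurable_pi_apply 0 hI)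
  have hV (s : ℝ) : MeasurableSet (V s) :=
    measurableSet_strictAnti.inter <| measurableSet_setOfPred.2 <| Measurable.forall fun i =>
      measurableSet_setOfPred.1 <| measurableSet_lt (measurable_pi_apply i) measurable_const
  let e := (MeasurableEquiv.piFinSuccAbove (fun _ : Fin (n + 1) => ℝ) 0).symm
  have he : MeasurePreserving e (volume.prod volume) volume :=
    (volume_preserving_piFinSuccAbove _ 0).symm
  have he_apply (s : ℝ) (z : Fin n → ℝ) : e (s, z) = Fin.cons s z := by
    simp [e, MeasurableEquiv.piFinSuccAbove_symm_apply, Fin.insertNthEquiv]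
  have hsplit (s : ℝ) (z : Fin n → ℝ) :
      T.indicator F (Fin.cons s z) = I.indicator (g 0) s * (V s).indicator G z := by
    have hF : F (Fin.cons s z) = g 0 s * G z := Fin.prod_univ_succ _
    have hmem : Fin.cons s z ∈ T ↔ s ∈ I ∧ z ∈ V s := by
      simp only [T, V, mem_ofPred_eq, Fin.strictAnti_cons, Fin.cons_zero]
      tauto
    classical
    simp only [indicator_apply, hmem, hF]
    split_ifs <;> simp_all
  have hint : Integrable (T.indicator F ∘ e) (volume.prod volume) :=
    (he.integrable_comp_emb e.measurableEmbedding).2 ((Integrable.fintype_prod hg).indicator hT)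
  calc ∫ y in T, F y = ∫ y, T.indicator F y := (integral_indicator hT).symm
    _ = ∫ p : ℝ × (Fin n → ℝ), T.indicator F (e p) := (he.integral_comp' _).symm
    _ = ∫ s, ∫ z, T.indicator F (e (s, z)) := integral_prod _ hint
    _ = ∫ s, I.indicator (fun s => g 0 s * ∫ z in V s, G z) s := by
      congr 1 with s
      simp_rw [he_apply, hsplit, integral_const_mul, integral_indicator (hV s),
        indicator_mul_left]
    _ = ∫ s in I, g 0 s * ∫ z in V s, G z := integral_indicator hI

lemma gumbelPDF_mul_plackettLuce_succ {n : ℕ} (μ : Fin (n + 1) → ℝ) (hμ : ∑ j, μ j ≠ 0)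
    (s : ℝ) :
    gumbelPDF (μ 0) s *
        (plackettLuce (fun i => μ i.succ) * gumbelCDF (∑ i : Fin n, μ i.succ) s) =
      plackettLuce μ * gumbelPDF (∑ j, μ j) s := by
  rw [Fin.sum_univ_succ] at hμ ⊢
  rw [plackettLuce_succ, Fin.sum_univ_succ, mul_left_comm, gumbelPDF_mul_gumbelCDF hμ]
  ring

theorem setIntegral_strictAnti_lt_prod_gumbelPDF {n : ℕ} (μ : Fin n → ℝ)
    (hμ : ∀ j, 0 < μ j) (u : ℝ) :
    ∫ y in {y : Fin n → ℝ | StrictAnti y ∧ ∀ i, y i < u}, ∏ j, gumbelPDF (μ j) (y j) =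
      plackettLuce μ * gumbelCDF (∑ j, μ j) u := by
  induction n generalizing u with
  | zero =>
    simp [plackettLuce, gumbelCDF, Subsingleton.strictAnti, measureReal_def, volume_pi]
  | succ n ih =>
    have hsum : 0 < ∑ j, μ j := Finset.sum_pos (fun j _ => hμ j) Finset.univ_nonempty
    have hset : {y : Fin (n + 1) → ℝ | StrictAnti y ∧ ∀ i, y i < u} =
        {y | StrictAnti y ∧ y 0 ∈ Iio u} :=
      ext fun y => and_congr_right fun hy =>
        ⟨fun h => h 0, fun h i => (hy.antitone (Fin.zero_le i)).trans_lt h⟩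
    rw [hset, setIntegral_strictAnti_cons (fun j => integrable_gumbelPDF (hμ j).le)
      measurableSet_Iio]
    simp_rw [ih (fun i => μ i.succ) (fun i => hμ _),
      gumbelPDF_mul_plackettLuce_succ μ hsum.ne']
    rw [integral_const_mul, integral_Iio_gumbelPDF hsum]

theorem setIntegral_strictAnti_prod_gumbelPDF {n : ℕ} (μ : Fin n → ℝ) (hμ : ∀ j, 0 < μ j) :
    ∫ y in {y : Fin n → ℝ | StrictAnti y}, ∏ j, gumbelPDF (μ j) (y j) = plackettLuce μ := by
  cases n with
  | zero => simp [plackettLuce, Subsingleton.strictAnti, measureReal_def, volume_pi]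
  | succ n =>
    have hsum : 0 < ∑ j, μ j := Finset.sum_pos (fun j _ => hμ j) Finset.univ_nonempty
    have hset : {y : Fin (n + 1) → ℝ | StrictAnti y} = {y | StrictAnti y ∧ y 0 ∈ univ} := by
      simp only [mem_univ, and_true]
    rw [hset, setIntegral_strictAnti_cons (fun j => integrable_gumbelPDF (hμ j).le)
      MeasurableSet.univ]
    simp_rw [setIntegral_strictAnti_lt_prod_gumbelPDF (fun i => μ i.succ) (fun i => hμ _),
      gumbelPDF_mul_plackettLuce_succ μ hsum.ne']
    rw [Measure.restrict_univ, integral_const_mul, integral_gumbelPDF hsum, mul_one]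

/-- The Gumbel location-family RUM with locations `θ j = log (lam j)` yields
exactly the Plackett-Luce ranking probabilities. -/
theorem stmt6 (m : ℕ) (lam : Fin m → ℝ) (hlam : ∀ j, 0 < lam j)
    (π : Equiv.Perm (Fin m)) :
    rumProb (fun _ x => Real.exp (-x) * Real.exp (-Real.exp (-x)))
        (fun j => Real.log (lam j)) π =
      ∏ j : Fin m, lam (π j) / ∑ j' ∈ Finset.Ici j, lam (π j') := by
  unfold rumProb
  simp_rw [← gumbelPDF_eq_comp_sub_log (hlam _)]
  exact (setIntegral_strictAnti_comp_perm π _).trans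
    (setIntegral_strictAnti_prod_gumbelPDF _ fun j => hlam (π j))
end

section
/- In a location-family random utility model on m ≥ 2 alternatives with measurable probability densities f_1,…,f_m that are strictly positive everywhere on ℝ, let D = (π^1,…,π^n) be data satisfying Condition 1: for every partition of {1,…,m} into two nonempty disjoint sets C_1 and C_2, there exist c_1 ∈ C_1, c_2 ∈ C_2, and some ranking π^i in D in which c_1 is ranked above c_2. Then the set S_D = {θ ∈ ℝ^m : θ_1 = 0 and l(θ;D) ≥ l(θ′;D) for all θ′ ∈ ℝ^m with θ′_1 = 0} of global maximizers of the log-likelihood on the hyperplane {θ_1 = 0} is bounded. -/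
/-! If `θ` lies on the hyperplane `θ₁ = 0` far from the origin, its coordinates spread over more
than `m` consecutive intervals of a fixed length `T`, so one of these intervals contains none of
them and splits the alternatives into a lower and an upper group. Condition 1 yields a ranking in
the data that places a lower alternative `a` above an upper one `b`, although `θ b - θ a > T`.
Since the utility difference `y a - y b` of the noise has vanishing tails, this ranking has
probability below `exp (l(0; D))` once `T` is large, and all other factors of the likelihood are at
most `1`; hence `l(θ; D) < l(0; D)` and `θ` is not a maximizer. -/

open MeasureTheory

/-- The log-likelihood of data `D` of rankings, valued in the extended reals
(so that rankings of probability `0` contribute `⊥ = −∞`). -/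
noncomputable def logLik {m n : ℕ} (f : Fin m → ℝ → ℝ)
    (D : Fin n → Equiv.Perm (Fin m)) (θ : Fin m → ℝ) : EReal :=
  ∑ i, ENNReal.log (ENNReal.ofReal (rumProb f θ (D i)))

/-- The set of global maximizers of the log-likelihood on the hyperplane where the
parameter of the first alternative is fixed to `0`. -/
noncomputable def maxSet {m n : ℕ} (hm : 0 < m) (f : Fin m → ℝ → ℝ)
    (D : Fin n → Equiv.Perm (Fin m)) : Set (Fin m → ℝ) :=
  {θ | θ ⟨0, hm⟩ = 0 ∧
    ∀ θ' : Fin m → ℝ, θ' ⟨0, hm⟩ = 0 → logLik f D θ' ≤ logLik f D θ}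

open Filter Topology

lemma EReal.coe_finset_sum {ι : Type*} (s : Finset ι) (g : ι → ℝ) :
    ((∑ i ∈ s, g i : ℝ) : EReal) = ∑ i ∈ s, (g i : EReal) :=
  map_sum (⟨⟨(↑), EReal.coe_zero⟩, EReal.coe_add⟩ : ℝ →+ EReal) g s

lemma tendsto_setIntegral_setOf_lt_atTop {X : Type*} [MeasurableSpace X] {μ : Measure X}
    {g : X → ℝ} (hg : Integrable g μ) {Z : X → ℝ} (hZ : Measurable Z) :
    Tendsto (fun t : ℝ => ∫ x in {x | t < Z x}, g x ∂μ) atTop (𝓝 0) := by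
  have hempty : ⋂ t : ℝ, {x | t < Z x} = ∅ :=
    Set.iInter_eq_empty_iff.mpr fun x => ⟨Z x, by simp⟩
  simpa [hempty] using tendsto_setIntegral_of_antitone (μ := μ) (f := g)
    (fun t => measurableSet_lt measurable_const hZ)
    (fun t t' htt' x (hx : t' < Z x) => htt'.trans_lt hx) ⟨0, hg.integrableOn⟩

/-- Pigeonhole: the minimum lies in none of the `card ι` intervals `(min + pT, min + (p+1)T]`,
so the remaining values cannot meet all of them. -/
lemma exists_gap {ι : Type*} [Fintype ι] (x : ι → ℝ) {T : ℝ} (hT : 0 ≤ T) {i j : ι}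
    (hij : Fintype.card ι * T < x j - x i) :
    ∃ c, (∃ k, x k ≤ c) ∧ (∃ k, c + T < x k) ∧ ∀ k, x k ≤ c ∨ c + T < x k := by
  obtain ⟨a, -, ha⟩ := Finset.exists_min_image Finset.univ x ⟨i, Finset.mem_univ i⟩
  by_contra! hfull
  have hhit : ∀ p : Fin (Fintype.card ι), ∃ k, x a + p * T < x k ∧ x k ≤ x a + (p + 1) * T := by
    intro p
    have hp : ((p : ℕ) + 1 : ℝ) ≤ Fintype.card ι := by exact_mod_cast p.isLt
    obtain ⟨k, hk1, hk2⟩ := hfull (x a + p * T) ⟨a, by nlinarith⟩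
      ⟨j, by nlinarith [ha i (Finset.mem_univ i)]⟩
    exact ⟨k, by linarith, by linarith⟩
  choose φ hφ1 hφ2 using hhit
  have hmono : StrictMono (x ∘ φ) := fun p q hpq => by
    have : ((p : ℕ) + 1 : ℝ) ≤ (q : ℕ) := by exact_mod_cast hpq
    have := hφ2 p
    have := hφ1 q
    simp only [Function.comp_apply]
    nlinarith
  obtain ⟨p, hp⟩ :=
    ((Fintype.bijective_iff_injective_and_card φ).mpr ⟨hmono.injective.of_comp, by simp⟩).2 a
  have := hφ1 p
  rw [hp] at this
  nlinarith [mul_nonneg (Nat.cast_nonneg (p : ℕ)) hT]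

/-- The region `A_π` of utility vectors realizing the ranking `π`. -/
def rankRegion {m : ℕ} (π : Equiv.Perm (Fin m)) : Set (Fin m → ℝ) :=
  {x | ∀ k l : Fin m, k < l → x (π l) < x (π k)}

lemma isOpen_rankRegion {m : ℕ} (π : Equiv.Perm (Fin m)) : IsOpen (rankRegion π) := by
  simp only [rankRegion, Set.ofPred_forall]
  exact isOpen_iInter_of_finite fun k => isOpen_iInter_of_finite fun l =>
    isOpen_iInter_of_finite fun _ => isOpen_lt (continuous_apply _) (continuous_apply _)

lemma rankRegion_nonempty {m : ℕ} (π : Equiv.Perm (Fin m)) : (rankRegion π).Nonempty :=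
  ⟨fun j => -(π.symm j : ℝ), fun k l hkl => by simpa using hkl⟩

lemma rankRegion_subset_of_lt {m : ℕ} {π : Equiv.Perm (Fin m)} {a b : Fin m}
    (hab : π.symm a < π.symm b) : rankRegion π ⊆ {x | x b < x a} := fun x hx => by
  simpa using hx _ _ hab

noncomputable def jointDensity {ι : Type*} [Fintype ι] (f : ι → ℝ → ℝ) (y : ι → ℝ) : ℝ :=
  ∏ j, f j (y j)

section JointDensity

variable {ι : Type*} [Fintype ι] {f : ι → ℝ → ℝ}

lemma jointDensity_pos (hpos : ∀ j x, 0 < f j x) (y : ι → ℝ) : 0 < jointDensity f y :=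
  Finset.prod_pos fun j _ => hpos j _

lemma integrable_jointDensity (hf : ∀ j, Integrable (f j)) : Integrable (jointDensity f) :=
  Integrable.fintype_prod_dep hf

lemma integral_jointDensity (hint : ∀ j, ∫ x, f j x = 1) : ∫ y, jointDensity f y = 1 :=
  (integral_fintype_prod_eq_prod (μ := fun _ => volume) f).trans
    (Finset.prod_eq_one fun j _ => hint j)

end JointDensity

section RumProb

variable {m : ℕ} {f : Fin m → ℝ → ℝ}

lemma rumProb_eq (f : Fin m → ℝ → ℝ) (θ : Fin m → ℝ) (π : Equiv.Perm (Fin m)) :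
    rumProb f θ π = ∫ x in rankRegion π, jointDensity f (x - θ) :=
  rfl

lemma rumProb_pos (hpos : ∀ j x, 0 < f j x) (hf : ∀ j, Integrable (f j))
    (θ : Fin m → ℝ) (π : Equiv.Perm (Fin m)) : 0 < rumProb f θ π := by
  have hshift : Integrable fun x => jointDensity f (x - θ) :=
    (integrable_jointDensity hf).comp_sub_right θ
  rw [rumProb_eq, setIntegral_pos_iff_support_of_nonneg_ae
    (.of_forall fun x => (jointDensity_pos hpos _).le) hshift.integrableOn,
    Function.support_eq_univ fun x => (jointDensity_pos hpos _).ne', Set.univ_inter]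
  exact (isOpen_rankRegion π).measure_pos volume (rankRegion_nonempty π)

lemma rumProb_le_one (hpos : ∀ j x, 0 < f j x) (hf : ∀ j, Integrable (f j))
    (hint : ∀ j, ∫ x, f j x = 1) (θ : Fin m → ℝ) (π : Equiv.Perm (Fin m)) :
    rumProb f θ π ≤ 1 := by
  calc rumProb f θ π ≤ ∫ x, jointDensity f (x - θ) :=
        setIntegral_le_integral ((integrable_jointDensity hf).comp_sub_right θ)
          (.of_forall fun x => (jointDensity_pos hpos _).le)
    _ = 1 := by rw [integral_sub_right_eq_self, integral_jointDensity hint]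

/-- Ranking `a` above `b` requires the noise `y = x - θ` to overcome the gap `θ b - θ a`. -/
lemma rumProb_le_setIntegral_jointDensity (hpos : ∀ j x, 0 < f j x)
    (hf : ∀ j, Integrable (f j)) (θ : Fin m → ℝ) {π : Equiv.Perm (Fin m)} {a b : Fin m}
    (hab : π.symm a < π.symm b) :
    rumProb f θ π ≤ ∫ y in {y | θ b - θ a < y a - y b}, jointDensity f y := by
  have hshift := (measurePreserving_add_right volume θ).setIntegral_preimage_emb
    (MeasurableEquiv.addRight θ).measurableEmbedding (fun x => jointDensity f (x - θ))
    (rankRegion π)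
  simp only [add_sub_cancel_right] at hshift
  rw [rumProb_eq, ← hshift]
  refine setIntegral_mono_set (integrable_jointDensity hf).integrableOn
    (.of_forall fun y => (jointDensity_pos hpos _).le) (.of_forall fun y hy => ?_)
  have : y b + θ b < y a + θ a := rankRegion_subset_of_lt hab hy
  show θ b - θ a < y a - y b
  linarith

lemma exists_forall_rumProb_lt (hpos : ∀ j x, 0 < f j x) (hf : ∀ j, Integrable (f j))
    {ε : ℝ} (hε : 0 < ε) :
    ∃ T, 0 ≤ T ∧ ∀ (θ : Fin m → ℝ) (π : Equiv.Perm (Fin m)) (a b : Fin m),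
      π.symm a < π.symm b → T < θ b - θ a → rumProb f θ π < ε := by
  have hsmall : ∀ᶠ t in atTop, ∀ a b : Fin m,
      ∫ y in {y | t < y a - y b}, jointDensity f y < ε :=
    eventually_all.2 fun a => eventually_all.2 fun b =>
      (tendsto_setIntegral_setOf_lt_atTop (integrable_jointDensity hf)
        ((measurable_pi_apply a).sub (measurable_pi_apply b))).eventually (gt_mem_nhds hε)
  obtain ⟨T, hT⟩ := eventually_atTop.1 hsmall
  refine ⟨max T 0, le_max_right _ _, fun θ π a b hab hθ => ?_⟩
  exact (rumProb_le_setIntegral_jointDensity hpos hf θ hab).trans_lt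
    (hT _ ((le_max_left _ _).trans hθ.le) a b)

end RumProb

section LogLik

variable {m n : ℕ} {f : Fin m → ℝ → ℝ}

lemma logLik_eq_coe (hpos : ∀ j x, 0 < f j x) (hf : ∀ j, Integrable (f j))
    (D : Fin n → Equiv.Perm (Fin m)) (θ : Fin m → ℝ) :
    logLik f D θ = ((∑ i, Real.log (rumProb f θ (D i)) : ℝ) : EReal) := by
  rw [EReal.coe_finset_sum]
  exact Finset.sum_congr rfl fun i _ => ENNReal.log_ofReal_of_pos (rumProb_pos hpos hf θ (D i))

/-- All the other factors of the likelihood are at most `1`. -/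
lemma logLik_lt_of_rumProb_lt (hpos : ∀ j x, 0 < f j x) (hf : ∀ j, Integrable (f j))
    (hint : ∀ j, ∫ x, f j x = 1) {D : Fin n → Equiv.Perm (Fin m)} {θ : Fin m → ℝ} {L : ℝ}
    {i : Fin n} (hi : rumProb f θ (D i) < Real.exp L) : logLik f D θ < L := by
  have hlog_nonpos : ∀ k, Real.log (rumProb f θ (D k)) ≤ 0 := fun k =>
    Real.log_nonpos (rumProb_pos hpos hf θ (D k)).le (rumProb_le_one hpos hf hint θ (D k))
  rw [logLik_eq_coe hpos hf, EReal.coe_lt_coe_iff]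
  calc ∑ k, Real.log (rumProb f θ (D k))
      ≤ Real.log (rumProb f θ (D i)) := by
        rw [← Finset.add_sum_erase _ _ (Finset.mem_univ i)]
        linarith [Finset.sum_nonpos fun k (_ : k ∈ Finset.univ.erase i) => hlog_nonpos k]
    _ < L := (Real.log_lt_iff_lt_exp (rumProb_pos hpos hf θ (D i))).2 hi

end LogLik

lemma exists_ranked_above_of_spread {m n : ℕ} {D : Fin n → Equiv.Perm (Fin m)}
    (hcond : ∀ C1 C2 : Set (Fin m), C1.Nonempty → C2.Nonempty →
      Disjoint C1 C2 → C1 ∪ C2 = Set.univ →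
      ∃ c1 ∈ C1, ∃ c2 ∈ C2, ∃ i : Fin n, (D i).symm c1 < (D i).symm c2)
    {θ : Fin m → ℝ} {T : ℝ} (hT : 0 ≤ T) {j k : Fin m} (hjk : m * T < θ k - θ j) :
    ∃ i a b, (D i).symm a < (D i).symm b ∧ T < θ b - θ a := by
  obtain ⟨c, hlow, hhigh, hgap⟩ := exists_gap θ hT (by simpa using hjk)
  obtain ⟨a, ha, b, hb, i, hab⟩ := hcond {l | θ l ≤ c} {l | c + T < θ l} hlow hhigh
    (Set.disjoint_left.2 fun l (hl : θ l ≤ c) (hl' : c + T < θ l) => by linarith)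
    (Set.eq_univ_of_forall hgap)
  exact ⟨i, a, b, hab, by simp only [Set.mem_ofPred_eq] at ha hb; linarith⟩

/-- Alternative `c₁` is ranked above `c₂` in the ranking `π` iff `π.symm c₁ < π.symm c₂`. -/
theorem stmt8 (m : ℕ) (hm : 2 ≤ m) (f : Fin m → ℝ → ℝ)
    (hpos : ∀ j x, 0 < f j x)
    (hint : ∀ j, ∫ x, f j x = 1)
    (n : ℕ) (D : Fin n → Equiv.Perm (Fin m))
    (hcond : ∀ C1 C2 : Set (Fin m), C1.Nonempty → C2.Nonempty →
      Disjoint C1 C2 → C1 ∪ C2 = Set.univ →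
      ∃ c1 ∈ C1, ∃ c2 ∈ C2, ∃ i : Fin n, (D i).symm c1 < (D i).symm c2) :
    Bornology.IsBounded (maxSet (by omega) f D) := by
  have hf : ∀ j, Integrable (f j) := fun j => .of_integral_ne_zero (by simp [hint j])
  set L := ∑ i, Real.log (rumProb f 0 (D i))
  obtain ⟨T, hT, hrare⟩ := exists_forall_rumProb_lt hpos hf (Real.exp_pos L)
  refine (Metric.isBounded_closedBall (x := 0) (r := m * T)).subset fun θ ⟨hθ0, hθmax⟩ => ?_
  rw [mem_closedBall_zero_iff, pi_norm_le_iff_of_nonneg (by positivity)]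
  intro j
  by_contra! hj
  obtain ⟨i, a, b, hab, hba⟩ : ∃ i a b, (D i).symm a < (D i).symm b ∧ T < θ b - θ a := by
    rcases lt_abs.mp (by simpa using hj) with hj | hj
    · exact exists_ranked_above_of_spread hcond hT (j := ⟨0, by omega⟩) (k := j)
        (by rw [hθ0]; linarith)
    · exact exists_ranked_above_of_spread hcond hT (j := j) (k := ⟨0, by omega⟩)
        (by rw [hθ0]; linarith)
  have hlt := logLik_lt_of_rumProb_lt hpos hf hint (hrare θ (D i) a b hab hba)
  have hle := hθmax 0 rfl
  rw [logLik_eq_coe hpos hf] at hle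
  exact hlt.not_ge hle
end

section
/- Monotone improvement when Condition 1 fails: in a location-family random utility model on m alternatives with measurable probability densities f_1,…,f_m, suppose there is a partition of {1,…,m} into nonempty disjoint sets C_1 and C_2 such that in every ranking π^i of the data D, every alternative of C_2 is ranked above every alternative of C_1. Then for every θ ∈ ℝ^m and every s ≥ 0, l(θ + s·𝟙_{C_2}; D) ≥ l(θ; D), where 𝟙_{C_2} ∈ ℝ^m is the indicator vector of C_2. Consequently, if the set of global maximizers of l(·;D) on the hyperplane {θ : θ_1 = 0} is nonempty, it is unbounded. -/
open MeasureTheory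

def rankSet {m : ℕ} (π : Equiv.Perm (Fin m)) : Set (Fin m → ℝ) :=
  {x : Fin m → ℝ | ∀ k l : Fin m, k < l → x (π l) < x (π k)}

lemma measurableSet_rankSet {m : ℕ} (π : Equiv.Perm (Fin m)) :
    MeasurableSet (rankSet π) := by
  have : rankSet π = ⋂ k, ⋂ l, {x : Fin m → ℝ | k < l → x (π l) < x (π k)} := by
    ext x; simp [rankSet, Set.mem_iInter]
  rw [this]
  refine MeasurableSet.iInter fun k => MeasurableSet.iInter fun l => ?_
  by_cases h : k < l
  · simp only [h, true_implies]
    exact measurableSet_lt (measurable_pi_apply _) (measurable_pi_apply _)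
  · simp [h]

lemma integrable_f {m : ℕ} (f : Fin m → ℝ → ℝ)
    (hint : ∀ j, ∫ x, f j x = 1) (j : Fin m) : Integrable (f j) := by
  by_contra h
  have := hint j
  rw [integral_undef h] at this
  exact one_ne_zero this.symm

lemma integrable_prodf {m : ℕ} (f : Fin m → ℝ → ℝ)
    (hint : ∀ j, ∫ x, f j x = 1) (θ : Fin m → ℝ) :
    Integrable (fun x : Fin m → ℝ => ∏ j, f j (x j - θ j)) :=
  Integrable.fintype_prod (fun j => (integrable_f f hint j).comp_sub_right (θ j))

lemma rumProb_shift {m : ℕ} (f : Fin m → ℝ → ℝ)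
    (θ c : Fin m → ℝ) (π : Equiv.Perm (Fin m)) :
    rumProb f (fun j => θ j + c j) π
      = ∫ x in (· + c) ⁻¹' rankSet π, ∏ j, f j (x j - θ j) := by
  have hA := measurableSet_rankSet π
  have hB : MeasurableSet ((· + c) ⁻¹' rankSet π) :=
    hA.preimage (measurable_add_const c)
  rw [show rumProb f (fun j => θ j + c j) π
      = ∫ x, (rankSet π).indicator (fun x => ∏ j, f j (x j - (θ j + c j))) x from
    (integral_indicator hA).symm]
  rw [← integral_add_right_eq_self
      (fun x => (rankSet π).indicator (fun x => ∏ j, f j (x j - (θ j + c j))) x) c]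
  rw [← integral_indicator hB]
  congr 1
  funext x
  by_cases hx : x ∈ (· + c) ⁻¹' rankSet π
  · rw [Set.indicator_of_mem hx,
      Set.indicator_of_mem (show x + c ∈ rankSet π from hx)]
    exact Finset.prod_congr rfl fun j _ => by simp only [Pi.add_apply]; ring_nf
  · rw [Set.indicator_of_notMem hx,
      Set.indicator_of_notMem (show x + c ∉ rankSet π from hx)]

lemma rumProb_le_shift {m : ℕ} (f : Fin m → ℝ → ℝ)
    (hnonneg : ∀ j x, 0 ≤ f j x) (hint : ∀ j, ∫ x, f j x = 1)
    (θ c : Fin m → ℝ) (π : Equiv.Perm (Fin m))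
    (hsub : rankSet π ⊆ (· + c) ⁻¹' rankSet π) :
    rumProb f θ π ≤ rumProb f (fun j => θ j + c j) π := by
  rw [rumProb_shift f θ c π]
  exact setIntegral_mono_set ((integrable_prodf f hint θ).integrableOn)
    (Filter.Eventually.of_forall fun x =>
      Finset.prod_nonneg fun j _ => hnonneg j _)
    (HasSubset.Subset.eventuallyLE hsub)

lemma rumProb_const_shift {m : ℕ} (f : Fin m → ℝ → ℝ)
    (θ : Fin m → ℝ) (c : ℝ) (π : Equiv.Perm (Fin m)) :
    rumProb f (fun j => θ j + c) π = rumProb f θ π := by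
  have h := rumProb_shift f θ (fun _ => c) π
  have hset : ((· + fun _ : Fin m => c) ⁻¹' rankSet π) = rankSet π := by
    ext x
    simp only [Set.mem_preimage, rankSet, Set.mem_setOf_eq, Pi.add_apply,
      add_lt_add_iff_right]
  rw [hset] at h
  exact h

lemma logLik_mono {m n : ℕ} (f : Fin m → ℝ → ℝ)
    (D : Fin n → Equiv.Perm (Fin m)) (θ θ' : Fin m → ℝ)
    (h : ∀ i, rumProb f θ (D i) ≤ rumProb f θ' (D i)) :
    logLik f D θ ≤ logLik f D θ' :=
  Finset.sum_le_sum fun i _ =>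
    ENNReal.log_le_log_iff.mpr (ENNReal.ofReal_le_ofReal (h i))

lemma logLik_const_shift {m n : ℕ} (f : Fin m → ℝ → ℝ)
    (D : Fin n → Equiv.Perm (Fin m)) (θ : Fin m → ℝ) (c : ℝ) :
    logLik f D (fun j => θ j + c) = logLik f D θ :=
  Finset.sum_congr rfl fun i _ => by rw [rumProb_const_shift]

/-- Monotone improvement when Condition 1 fails: if in every ranking of the data
every alternative of `C2` is ranked above every alternative of `C1`, then shifting
all parameters of `C2` up by `s ≥ 0` does not decrease the log-likelihood; hence
the set of global maximizers on the hyperplane `θ_1 = 0`, if nonempty, is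
unbounded. Alternative `a` is ranked above `b` in `π` iff `π.symm a < π.symm b`. -/
theorem stmt9 (m : ℕ) (hm : 1 ≤ m) (f : Fin m → ℝ → ℝ)
    (hmeas : ∀ j, Measurable (f j))
    (hnonneg : ∀ j x, 0 ≤ f j x)
    (hint : ∀ j, ∫ x, f j x = 1)
    (n : ℕ) (D : Fin n → Equiv.Perm (Fin m))
    (C1 C2 : Finset (Fin m)) (h1 : C1.Nonempty) (h2 : C2.Nonempty)
    (hdisj : Disjoint C1 C2) (hunion : C1 ∪ C2 = Finset.univ)
    (habove : ∀ i : Fin n, ∀ a ∈ C2, ∀ b ∈ C1, (D i).symm a < (D i).symm b) :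
    (∀ (θ : Fin m → ℝ) (s : ℝ), 0 ≤ s →
      logLik f D θ ≤ logLik f D (fun j => θ j + if j ∈ C2 then s else 0)) ∧
    ((maxSet (by omega) f D).Nonempty →
      ¬ Bornology.IsBounded (maxSet (by omega : 0 < m) f D)) := by
  -- main monotonicity statement
  have key : ∀ (θ : Fin m → ℝ) (s : ℝ), 0 ≤ s →
      logLik f D θ ≤ logLik f D (fun j => θ j + if j ∈ C2 then s else 0) := by
    intro θ s hs
    refine logLik_mono f D θ _ fun i => ?_
    refine rumProb_le_shift f hnonneg hint θ
      (fun j => if j ∈ C2 then s else 0) (D i) ?_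
    intro x hx k l hkl
    have hx' := hx k l hkl
    simp only [Set.mem_preimage, rankSet, Set.mem_setOf_eq] at *
    have hmem : ∀ j : Fin m, j ∉ C2 → j ∈ C1 := by
      intro j hj
      have : j ∈ C1 ∪ C2 := hunion ▸ Finset.mem_univ j
      rcases Finset.mem_union.mp this with h | h
      · exact h
      · exact absurd h hj
    show x ((D i) l) + (if (D i) l ∈ C2 then s else 0)
      < x ((D i) k) + (if (D i) k ∈ C2 then s else 0)
    split_ifs with h2l h2k h2k
    · linarith
    · exfalso
      have := habove i _ h2l _ (hmem _ h2k)
      simp only [Equiv.symm_apply_apply] at this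
      exact absurd hkl (not_lt.mpr this.le)
    · linarith
    · linarith
  refine ⟨key, ?_⟩
  rintro ⟨θ0, hθ00, hθ0max⟩ hbnd
  obtain ⟨R, hR⟩ := isBounded_iff_forall_norm_le.mp hbnd
  by_cases h0 : (⟨0, by omega⟩ : Fin m) ∈ C2
  · -- shift C1 down
    obtain ⟨b, hb⟩ := h1
    set s : ℝ := R + |θ0 b| + 1 with hsdef
    have hs : 0 ≤ s := by
      have := abs_nonneg (θ0 b)
      have : 0 ≤ R := le_trans (norm_nonneg θ0) (hR θ0 ⟨hθ00, hθ0max⟩)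
      linarith [abs_nonneg (θ0 b)]
    set θs : Fin m → ℝ := fun j => θ0 j + if j ∈ C1 then -s else 0 with hθs
    have heq : θs = fun j => (θ0 j + -s) + if j ∈ C2 then s else 0 := by
      funext j
      by_cases hj : j ∈ C2
      · have : j ∉ C1 := fun h => (Finset.disjoint_left.mp hdisj h) hj
        simp [hθs, hj, this]
      · have hj1 : j ∈ C1 := by
          have : j ∈ C1 ∪ C2 := hunion ▸ Finset.mem_univ j
          rcases Finset.mem_union.mp this with h | h
          · exact h
          · exact absurd h hj
        simp [hθs, hj, hj1]; try ring
    have hll : logLik f D θ0 ≤ logLik f D θs := by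
      rw [heq]
      calc logLik f D θ0 = logLik f D (fun j => θ0 j + -s) :=
            (logLik_const_shift f D θ0 (-s)).symm
        _ ≤ _ := key (fun j => θ0 j + -s) s hs
    have hmem : θs ∈ maxSet (by omega : 0 < m) f D := by
      constructor
      · have : (⟨0, by omega⟩ : Fin m) ∉ C1 :=
          fun h => (Finset.disjoint_left.mp hdisj h) h0
        simp [hθs, this, hθ00]
      · intro θ' hθ'
        exact le_trans (hθ0max θ' hθ') hll
    have hnorm := hR θs hmem
    have h1b : |θs b| ≤ ‖θs‖ := by
      have := norm_le_pi_norm θs b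
      rwa [Real.norm_eq_abs] at this
    have : θs b = θ0 b - s := by simp [hθs, hb]; ring
    rw [this] at h1b
    have : s - |θ0 b| ≤ |θ0 b - s| := by
      have h1 := neg_le_abs (θ0 b - s)
      have h2 := le_abs_self (θ0 b)
      linarith
    linarith
  · -- shift C2 up
    obtain ⟨a, ha⟩ := h2
    set s : ℝ := R + |θ0 a| + 1 with hsdef
    have hs : 0 ≤ s := by
      have : 0 ≤ R := le_trans (norm_nonneg θ0) (hR θ0 ⟨hθ00, hθ0max⟩)
      linarith [abs_nonneg (θ0 a)]
    set θs : Fin m → ℝ := fun j => θ0 j + if j ∈ C2 then s else 0 with hθs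
    have hll : logLik f D θ0 ≤ logLik f D θs := key θ0 s hs
    have hmem : θs ∈ maxSet (by omega : 0 < m) f D := by
      constructor
      · simp [hθs, h0, hθ00]
      · intro θ' hθ'
        exact le_trans (hθ0max θ' hθ') hll
    have hnorm := hR θs hmem
    have h1a : |θs a| ≤ ‖θs‖ := by
      have := norm_le_pi_norm θs a
      rwa [Real.norm_eq_abs] at this
    have : θs a = θ0 a + s := by simp [hθs, ha]
    rw [this] at h1a
    have : s - |θ0 a| ≤ |θ0 a + s| := by
      have h1 := le_abs_self (θ0 a + s)
      have h2 := neg_abs_le (θ0 a)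
      linarith
    linarith
end
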